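/- arXiv:2506.01081 — 2 statements merged into one kernel-verified Lean document; each statement's English description precedes it below -/
import Mathlib

section
/- Assume M is symmetric positive definite, M = U Λ Uᵀ with U orthogonal and Λ diagonal, all eigenvalues of M lie in an interval [a, b] with 0, 1 ∉ [a, b], and m < k. Starting from u₀, let u_j = q(u_{j−1}) for j = 1, …, k, and let u_{k+1} be produced by a single NGMRES(m) step from u_{k−m}, …, u_k. Then ‖(I − Λ) Uᵀ e_{k+1}‖ ≤ ε(a, b, m+1) · ‖(I − Λ) Uᵀ M e_k‖. -/
open Matrix Polynomial Set

noncomputable section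

/-- Matrix–vector product, landing in Euclidean space. -/
def mulVecE {n : ℕ} (M : Matrix (Fin n) (Fin n) ℝ) (v : EuclideanSpace ℝ (Fin n)) :
    EuclideanSpace ℝ (Fin n) :=
  WithLp.toLp 2 (M.mulVec v)

/-- Residual `r(u) = A u - b`. -/
def res {n : ℕ} (A : Matrix (Fin n) (Fin n) ℝ) (b u : EuclideanSpace ℝ (Fin n)) :
    EuclideanSpace ℝ (Fin n) :=
  mulVecE A u - b

/-- Richardson fixed-point map `q(u) = (I - A) u + b = M u + b` with `M = I - A`. -/
def fp {n : ℕ} (A : Matrix (Fin n) (Fin n) ℝ) (b u : EuclideanSpace ℝ (Fin n)) :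
    EuclideanSpace ℝ (Fin n) :=
  mulVecE (1 - A) u + b

/-- The NGMRES(m) least-squares objective at step `k`:
`β ↦ ‖r(q(u_k)) + Σ_{i=0}^m β_i (r(q(u_k)) - r(u_{k-i}))‖`. -/
def ngObj {n : ℕ} (A : Matrix (Fin n) (Fin n) ℝ) (b : EuclideanSpace ℝ (Fin n))
    (m : ℕ) (prev : ℕ → EuclideanSpace ℝ (Fin n)) (k : ℕ) (β : Fin (m+1) → ℝ) : ℝ :=
  ‖res A b (fp A b (prev k)) +
    ∑ i : Fin (m+1), β i • (res A b (fp A b (prev k)) - res A b (prev (k - (i : ℕ))))‖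

/-- `next` is produced from `prev (k-m), …, prev k` by a single NGMRES(m) step:
`next = q(u_k) + Σ_{i=0}^m β_i (q(u_k) - u_{k-i})` where `β` minimizes the
least-squares objective `ngObj`. -/
def NGMRESStep {n : ℕ} (A : Matrix (Fin n) (Fin n) ℝ) (b : EuclideanSpace ℝ (Fin n))
    (m : ℕ) (prev : ℕ → EuclideanSpace ℝ (Fin n)) (k : ℕ)
    (next : EuclideanSpace ℝ (Fin n)) : Prop :=
  ∃ β : Fin (m+1) → ℝ,
    (∀ γ : Fin (m+1) → ℝ, ngObj A b m prev k β ≤ ngObj A b m prev k γ) ∧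
    next = fp A b (prev k) +
      ∑ i : Fin (m+1), β i • (fp A b (prev k) - prev (k - (i : ℕ)))

/-- The spectral (ℓ²-operator) norm of a matrix. -/
def opNorm {n : ℕ} (M : Matrix (Fin n) (Fin n) ℝ) : ℝ :=
  ‖(Matrix.toEuclideanCLM (𝕜 := ℝ) M : EuclideanSpace ℝ (Fin n) →L[ℝ] EuclideanSpace ℝ (Fin n))‖

/-- The 2-norm condition number `κ₂(U) = ‖U‖ ‖U⁻¹‖`. -/
def condNum {n : ℕ} (U : Matrix (Fin n) (Fin n) ℝ) : ℝ :=
  opNorm U * opNorm U⁻¹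

/-- `ε(a,b,s)`: minimum over real polynomials `p` of degree at most `s` with `p(1) = 1`
of `max_{t ∈ [1/b, 1/a]} |p(t)|`. -/
def eps (a b : ℝ) (s : ℕ) : ℝ :=
  sInf {t : ℝ | ∃ p : Polynomial ℝ, p.natDegree ≤ s ∧ p.eval 1 = 1 ∧
    t = sSup ((fun x => |p.eval x|) '' Set.Icc (1/b) (1/a))}

/-- `χ(s)`: minimum over real polynomials `p` of degree at most `s` with `p(1) = 1`
of `max_{λ ∈ Σ(M)} |p(λ)|`, where `Σ(M)` is the set of eigenvalues of `M`. -/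
def chiSp {n : ℕ} (M : Matrix (Fin n) (Fin n) ℝ) (s : ℕ) : ℝ :=
  sInf {t : ℝ | ∃ p : Polynomial ℝ, p.natDegree ≤ s ∧ p.eval 1 = 1 ∧
    t = sSup ((fun x => |p.eval x|) '' spectrum ℝ M)}

/-- The Krylov subspace `K_k(A, r) = span{r, Ar, …, A^{k-1} r}`. -/
def Krylov {n : ℕ} (A : Matrix (Fin n) (Fin n) ℝ) (r : EuclideanSpace ℝ (Fin n)) (k : ℕ) :
    Submodule ℝ (EuclideanSpace ℝ (Fin n)) :=
  Submodule.span ℝ (Set.range fun i : Fin k => mulVecE (A ^ (i : ℕ)) r)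

/-- The matrix `S_k = [u_{k-m+1}-u_{k-m}, …, u_k-u_{k-1}, q(u_k)-u_k] ∈ ℝ^{n×(m+1)}`. -/
def Smat {n : ℕ} (A : Matrix (Fin n) (Fin n) ℝ) (b : EuclideanSpace ℝ (Fin n))
    (prev : ℕ → EuclideanSpace ℝ (Fin n)) (k m : ℕ) :
    Matrix (Fin n) (Fin (m+1)) ℝ :=
  Matrix.of fun r c =>
    if (c : ℕ) < m then prev (k - m + c + 1) r - prev (k - m + c) r
    else fp A b (prev k) r - prev k r

/-- `u` is the sequence of aNGMRES(m, p) iterates (with `m = ⊤` giving aNGMRES(∞, p)):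
if `p ∤ k` then `u_k = q(u_{k-1})`, and if `p ∣ k` then `u_k` is produced by one
NGMRES(min(m, k-1)) step from `u_{k-1-m_k}, …, u_{k-1}`. -/
def aNGMRES {n : ℕ} (A : Matrix (Fin n) (Fin n) ℝ) (b : EuclideanSpace ℝ (Fin n))
    (m : ℕ∞) (p : ℕ) (u : ℕ → EuclideanSpace ℝ (Fin n)) : Prop :=
  ∀ k, 1 ≤ k →
    (¬ p ∣ k → u k = fp A b (u (k-1))) ∧
    (p ∣ k → NGMRESStep A b (min m ((k : ℕ∞) - 1)).toNat u (k-1) (u k))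

/-!
Write `M = 1 - A` and `e_j = u_j - u*`. Richardson steps give `e_{k-i} = M^{m-i} e_{k-m}` and
`q(u_k) - u* = M^{m+1} e_{k-m}`, so the NGMRES candidate with coefficients `γ` has error
`P_γ(M) e_{k-m}` with `P_γ(x) = x^{m+1} + Σ γ_i (x^{m+1} - x^{m-i})`, and its residual norm is
the objective that `β` minimizes. Given `p` of degree `≤ m+1` with `p(1) = 1`, the choice
`γ_i = -p_{i+1}` gives `P_γ(x) = x^{m+1} p(1/x)`. Because `(1 - Λ) Uᵀ = Uᵀ A` with `U`
orthogonal, `‖(1 - Λ) Uᵀ e‖ = ‖A e‖` is a residual norm, and in the eigenbasis the weighted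
error of the `p`-candidate is `(1 - Λ) Uᵀ M e_k` scaled componentwise by `p(1/d_j)`, where
`1/d_j ∈ [1/b, 1/a]`. Minimizing over `p` gives `ε(a, b, m+1)`.
-/

open scoped Pointwise

section EuclideanMatrix

variable {n : ℕ}

lemma mulVecE_eq_toLpLin (M : Matrix (Fin n) (Fin n) ℝ) (x : EuclideanSpace ℝ (Fin n)) :
    mulVecE M x = toLpLin 2 2 M x := rfl

lemma mulVecE_mul (M N : Matrix (Fin n) (Fin n) ℝ) (x : EuclideanSpace ℝ (Fin n)) :
    mulVecE (M * N) x = mulVecE M (mulVecE N x) := by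
  simp only [mulVecE_eq_toLpLin, toLpLin_mul_same, LinearMap.comp_apply]

lemma mulVecE_diagonal_apply (f : Fin n → ℝ) (x : EuclideanSpace ℝ (Fin n)) (j : Fin n) :
    mulVecE (diagonal f) x j = f j * x j :=
  mulVec_diagonal f x j

lemma norm_mulVecE_of_transpose_mul_self {V : Matrix (Fin n) (Fin n) ℝ} (hV : Vᵀ * V = 1)
    (x : EuclideanSpace ℝ (Fin n)) : ‖mulVecE V x‖ = ‖x‖ := by
  rw [← sq_eq_sq₀ (norm_nonneg _) (norm_nonneg _), ← real_inner_self_eq_norm_sq,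
    ← real_inner_self_eq_norm_sq, EuclideanSpace.inner_eq_star_dotProduct,
    EuclideanSpace.inner_eq_star_dotProduct]
  simp only [mulVecE, star_trivial]
  rw [dotProduct_mulVec, ← mulVec_transpose, mulVec_mulVec, hV, one_mulVec]

lemma mulVecE_pow_apply_of_semiconjBy {U M : Matrix (Fin n) (Fin n) ℝ} {d : Fin n → ℝ}
    (h : SemiconjBy U M (diagonal d)) (t : ℕ) (x : EuclideanSpace ℝ (Fin n)) (j : Fin n) :
    mulVecE U (mulVecE (M ^ t) x) j = d j ^ t * mulVecE U x j := by
  rw [← mulVecE_mul, (h.pow_right t).eq, diagonal_pow, mulVecE_mul, mulVecE_diagonal_apply,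
    Pi.pow_apply]

end EuclideanMatrix

lemma norm_le_mul_norm_of_abs_apply_le {ι : Type*} [Fintype ι] {x y : EuclideanSpace ℝ ι}
    {C : ℝ} (hC : 0 ≤ C) (h : ∀ j, |x j| ≤ C * |y j|) : ‖x‖ ≤ C * ‖y‖ := by
  rw [EuclideanSpace.norm_eq, EuclideanSpace.norm_eq, ← Real.sqrt_sq hC,
    ← Real.sqrt_mul (sq_nonneg C), Finset.mul_sum]
  gcongr with j
  simpa only [Real.norm_eq_abs, mul_pow] using pow_le_pow_left₀ (abs_nonneg _) (h j) 2

lemma le_sInf_mul {S : Set ℝ} (hS : S.Nonempty) {L R : ℝ} (hR : 0 ≤ R)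
    (h : ∀ t ∈ S, L ≤ t * R) : L ≤ sInf S * R := by
  rw [mul_comm, ← smul_eq_mul, ← Real.sInf_smul_of_nonneg hR]
  refine le_csInf (hS.smul_set) ?_
  rintro _ ⟨t, ht, rfl⟩
  simpa only [smul_eq_mul, mul_comm] using h t ht

lemma inv_mem_Icc_inv {a c x : ℝ} (h0 : (0 : ℝ) ∉ Icc a c) (hx : x ∈ Icc a c) :
    x⁻¹ ∈ Icc (1 / c) (1 / a) := by
  obtain ⟨hax, hxc⟩ := hx
  rw [one_div, one_div]
  rcases lt_or_ge 0 a with ha | ha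
  · exact ⟨inv_anti₀ (ha.trans_le hax) hxc, inv_anti₀ ha hax⟩
  · have hc : c < 0 := not_le.mp fun hc => h0 ⟨ha, hc⟩
    have hx : x < 0 := hxc.trans_lt hc
    exact ⟨(inv_le_inv_of_neg hc hx).2 hxc, (inv_le_inv_of_neg hx (hax.trans_lt hx)).2 hax⟩

lemma pow_mul_eval_inv {m : ℕ} {p : ℝ[X]} (hdeg : p.natDegree ≤ m + 1) (hp1 : p.eval 1 = 1)
    {x : ℝ} (hx : x ≠ 0) :
    x ^ (m + 1) * p.eval x⁻¹ =
      x ^ (m + 1) + ∑ i : Fin (m + 1), -p.coeff (i + 1) * (x ^ (m + 1) - x ^ (m - i)) := by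
  have heval (y : ℝ) :
      p.eval y = p.coeff 0 + ∑ i : Fin (m + 1), p.coeff (i + 1) * y ^ (i + 1 : ℕ) := by
    rw [eval_eq_sum_range' (Nat.lt_succ_of_le hdeg), Finset.sum_range_succ', add_comm,
      Fin.sum_univ_eq_sum_range (fun i => p.coeff (i + 1) * y ^ (i + 1)), pow_zero, mul_one]
  have hcoeff0 : p.coeff 0 = 1 - ∑ i : Fin (m + 1), p.coeff (i + 1) := by
    simpa [eq_sub_iff_add_eq, hp1] using (heval 1).symm
  have hterm (i : Fin (m + 1)) : x ^ (m + 1) * x⁻¹ ^ (i + 1 : ℕ) = x ^ (m - i) := by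
    rw [inv_pow, ← div_eq_mul_inv, div_eq_iff (pow_ne_zero _ hx), ← pow_add]
    congr 1
    omega
  rw [heval, hcoeff0, mul_add, Finset.mul_sum]
  simp only [mul_left_comm (x ^ (m + 1)) (p.coeff _), hterm, neg_mul, mul_sub,
    Finset.sum_neg_distrib, Finset.sum_sub_distrib, ← Finset.sum_mul]
  ring

section Richardson

variable {n m k : ℕ} {A : Matrix (Fin n) (Fin n) ℝ} {b ustar : EuclideanSpace ℝ (Fin n)}
  {u : ℕ → EuclideanSpace ℝ (Fin n)}

lemma fp_sub_eq (hustar : mulVecE A ustar = b) (x : EuclideanSpace ℝ (Fin n)) :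
    fp A b x - ustar = mulVecE (1 - A) (x - ustar) := by
  simp only [fp, mulVecE_eq_toLpLin, map_sub, LinearMap.sub_apply, toLpLin_one,
    LinearMap.id_apply] at hustar ⊢
  rw [← hustar]
  abel

lemma res_eq_mulVecE_sub (hustar : mulVecE A ustar = b) (x : EuclideanSpace ℝ (Fin n)) :
    res A b x = mulVecE A (x - ustar) := by
  rw [res, ← hustar, mulVecE_eq_toLpLin, mulVecE_eq_toLpLin, mulVecE_eq_toLpLin, map_sub]

lemma iterate_sub_eq_mulVecE_pow (hustar : mulVecE A ustar = b)
    (hfp : ∀ j, 1 ≤ j → j ≤ k → u j = fp A b (u (j - 1))) {s t : ℕ}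
    (hst : s + t ≤ k) :
    u (s + t) - ustar = mulVecE ((1 - A) ^ t) (u s - ustar) := by
  induction t with
  | zero => simp [mulVecE_eq_toLpLin]
  | succ t ih =>
    rw [hfp _ (by omega) hst, show s + (t + 1) - 1 = s + t by omega, fp_sub_eq hustar,
      ih (by omega), ← mulVecE_mul, ← pow_succ']

def ngCand (A : Matrix (Fin n) (Fin n) ℝ) (b : EuclideanSpace ℝ (Fin n)) (m : ℕ)
    (u : ℕ → EuclideanSpace ℝ (Fin n)) (k : ℕ) (γ : Fin (m + 1) → ℝ) :
    EuclideanSpace ℝ (Fin n) :=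
  fp A b (u k) + ∑ i : Fin (m + 1), γ i • (fp A b (u k) - u (k - i))

lemma ngObj_eq_norm_res_ngCand (γ : Fin (m + 1) → ℝ) :
    ngObj A b m u k γ = ‖res A b (ngCand A b m u k γ)‖ := by
  simp only [ngObj, ngCand, res, mulVecE_eq_toLpLin, map_add, map_sum, map_smul, map_sub,
    sub_sub_sub_cancel_right]
  congr 1
  abel

lemma NGMRESStep.norm_res_le {next : EuclideanSpace ℝ (Fin n)} (h : NGMRESStep A b m u k next)
    (γ : Fin (m + 1) → ℝ) : ‖res A b next‖ ≤ ‖res A b (ngCand A b m u k γ)‖ := by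
  obtain ⟨β, hmin, rfl⟩ := h
  rw [← ngObj_eq_norm_res_ngCand]
  exact (ngObj_eq_norm_res_ngCand β).symm.trans_le (hmin γ)

end Richardson

section Spectral

variable {n m k : ℕ} {A U : Matrix (Fin n) (Fin n) ℝ} {d : Fin n → ℝ}
  {b ustar : EuclideanSpace ℝ (Fin n)} {u : ℕ → EuclideanSpace ℝ (Fin n)}

lemma semiconjBy_transpose_of_eq_mul_diagonal_mul {M : Matrix (Fin n) (Fin n) ℝ}
    (hU : Uᵀ * U = 1) (hM : M = U * diagonal d * Uᵀ) : SemiconjBy Uᵀ M (diagonal d) := by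
  rw [SemiconjBy, hM, ← Matrix.mul_assoc, ← Matrix.mul_assoc, hU, Matrix.one_mul]

lemma mulVecE_iterate_sub_apply (h : SemiconjBy Uᵀ (1 - A) (diagonal d))
    (hustar : mulVecE A ustar = b) (hfp : ∀ j, 1 ≤ j → j ≤ k → u j = fp A b (u (j - 1)))
    {s t : ℕ} (hst : s + t ≤ k) (j : Fin n) :
    mulVecE Uᵀ (u (s + t) - ustar) j = d j ^ t * mulVecE Uᵀ (u s - ustar) j := by
  rw [iterate_sub_eq_mulVecE_pow hustar hfp hst, mulVecE_pow_apply_of_semiconjBy h]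

lemma mulVecE_fp_iterate_sub_apply (h : SemiconjBy Uᵀ (1 - A) (diagonal d))
    (hustar : mulVecE A ustar = b) (hfp : ∀ j, 1 ≤ j → j ≤ k → u j = fp A b (u (j - 1)))
    (hmk : m ≤ k) (j : Fin n) :
    mulVecE Uᵀ (fp A b (u k) - ustar) j = d j ^ (m + 1) * mulVecE Uᵀ (u (k - m) - ustar) j := by
  have hk : u k = u (k - m + m) := by rw [Nat.sub_add_cancel hmk]
  rw [fp_sub_eq hustar, ← pow_one (1 - A), mulVecE_pow_apply_of_semiconjBy h, pow_one, hk,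
    mulVecE_iterate_sub_apply h hustar hfp (by omega), pow_succ', mul_assoc]

lemma mulVecE_ngCand_sub_apply (h : SemiconjBy Uᵀ (1 - A) (diagonal d))
    (hustar : mulVecE A ustar = b) (hfp : ∀ j, 1 ≤ j → j ≤ k → u j = fp A b (u (j - 1)))
    (hmk : m ≤ k) (γ : Fin (m + 1) → ℝ) (j : Fin n) :
    mulVecE Uᵀ (ngCand A b m u k γ - ustar) j =
      (d j ^ (m + 1) + ∑ i : Fin (m + 1), γ i * (d j ^ (m + 1) - d j ^ (m - i))) *
        mulVecE Uᵀ (u (k - m) - ustar) j := by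
  have hprev (i : Fin (m + 1)) : mulVecE Uᵀ (u (k - i) - ustar) j =
      d j ^ (m - i) * mulVecE Uᵀ (u (k - m) - ustar) j := by
    rw [show k - (i : ℕ) = k - m + (m - i) by omega,
      mulVecE_iterate_sub_apply h hustar hfp (by omega)]
  have hlast := mulVecE_fp_iterate_sub_apply h hustar hfp hmk j
  have hdecomp : ngCand A b m u k γ - ustar = (fp A b (u k) - ustar) +
      ∑ i : Fin (m + 1), γ i • ((fp A b (u k) - ustar) - (u (k - i) - ustar)) := by
    simp only [ngCand, sub_sub_sub_cancel_right]
    abel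
  rw [hdecomp, mulVecE_eq_toLpLin, map_add, map_sum, PiLp.add_apply, WithLp.ofLp_sum,
    Finset.sum_apply, ← mulVecE_eq_toLpLin, hlast, add_mul, Finset.sum_mul]
  congr 1
  refine Finset.sum_congr rfl fun i _ => ?_
  rw [map_smul, map_sub, PiLp.smul_apply, PiLp.sub_apply, ← mulVecE_eq_toLpLin,
    ← mulVecE_eq_toLpLin, hlast, hprev, smul_eq_mul]
  ring

theorem NGMRESStep.norm_err_le {next : EuclideanSpace ℝ (Fin n)} (hU : Uᵀ * U = 1)
    (hM : 1 - A = U * diagonal d * Uᵀ) (hd0 : ∀ j, d j ≠ 0) (hustar : mulVecE A ustar = b)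
    (hfp : ∀ j, 1 ≤ j → j ≤ k → u j = fp A b (u (j - 1))) (hmk : m ≤ k)
    (hstep : NGMRESStep A b m u k next) {p : ℝ[X]} (hdeg : p.natDegree ≤ m + 1)
    (hp1 : p.eval 1 = 1) {S : ℝ} (hS0 : 0 ≤ S) (hS : ∀ j, |p.eval (d j)⁻¹| ≤ S) :
    ‖mulVecE ((1 - diagonal d) * Uᵀ) (next - ustar)‖ ≤
      S * ‖mulVecE ((1 - diagonal d) * Uᵀ * (1 - A)) (u k - ustar)‖ := by
  have hsc := semiconjBy_transpose_of_eq_mul_diagonal_mul hU hM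
  have hweight : (1 - diagonal d) * Uᵀ = Uᵀ * A := by
    rw [Matrix.sub_mul, ← hsc.eq, Matrix.mul_sub, Matrix.one_mul, Matrix.mul_one, sub_sub_cancel]
  have hnorm (x : EuclideanSpace ℝ (Fin n)) :
      ‖mulVecE ((1 - diagonal d) * Uᵀ) (x - ustar)‖ = ‖res A b x‖ := by
    rw [hweight, mulVecE_mul, res_eq_mulVecE_sub hustar,
      norm_mulVecE_of_transpose_mul_self (by rw [transpose_transpose, mul_eq_one_comm.mp hU])]
  have hcoord (x : EuclideanSpace ℝ (Fin n)) (j : Fin n) :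
      mulVecE ((1 - diagonal d) * Uᵀ) x j = (1 - d j) * mulVecE Uᵀ x j := by
    rw [mulVecE_mul, ← diagonal_one, diagonal_sub, mulVecE_diagonal_apply]
  let γ : Fin (m + 1) → ℝ := fun i => -p.coeff (i + 1)
  calc ‖mulVecE ((1 - diagonal d) * Uᵀ) (next - ustar)‖ = ‖res A b next‖ := hnorm next
    _ ≤ ‖res A b (ngCand A b m u k γ)‖ := hstep.norm_res_le γ
    _ = ‖mulVecE ((1 - diagonal d) * Uᵀ) (ngCand A b m u k γ - ustar)‖ := (hnorm _).symm
    _ ≤ S * _ := norm_le_mul_norm_of_abs_apply_le hS0 fun j => ?_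
  rw [hcoord, mulVecE_ngCand_sub_apply hsc hustar hfp hmk, ← pow_mul_eval_inv hdeg hp1 (hd0 j),
    mulVecE_mul, hcoord, ← fp_sub_eq hustar, mulVecE_fp_iterate_sub_apply hsc hustar hfp hmk,
    show ∀ x y z : ℝ, x * (y * p.eval (d j)⁻¹ * z) = p.eval (d j)⁻¹ * (x * (y * z)) by
      intros; ring, abs_mul]
  exact mul_le_mul_of_nonneg_right (hS j) (abs_nonneg _)

end Spectral

theorem stmt_4_general {n m k : ℕ} (A U : Matrix (Fin n) (Fin n) ℝ) (d : Fin n → ℝ)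
    (hU : Uᵀ * U = 1)
    (hM : (1 : Matrix (Fin n) (Fin n) ℝ) - A = U * Matrix.diagonal d * Uᵀ)
    (a c : ℝ)
    (h0 : (0 : ℝ) ∉ Set.Icc a c)
    (hd : ∀ i, d i ∈ Set.Icc a c)
    (b ustar : EuclideanSpace ℝ (Fin n)) (hustar : mulVecE A ustar = b)
    (u : ℕ → EuclideanSpace ℝ (Fin n))
    (hfp : ∀ j, 1 ≤ j → j ≤ k → u j = fp A b (u (j-1)))
    (hmk : m < k) (next : EuclideanSpace ℝ (Fin n))
    (hstep : NGMRESStep A b m u k next) :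
    ‖mulVecE ((1 - Matrix.diagonal d) * Uᵀ) (next - ustar)‖ ≤
      eps a c (m+1) *
        ‖mulVecE ((1 - Matrix.diagonal d) * Uᵀ * (1 - A)) (u k - ustar)‖ := by
  have hd0 (j : Fin n) : d j ≠ 0 := fun h => h0 (h ▸ hd j)
  rw [eps]
  refine le_sInf_mul ?_ (norm_nonneg _) ?_
  · exact ⟨_, 1, by simp, by simp, rfl⟩
  rintro _ ⟨p, hdeg, hp1, rfl⟩
  have hbdd : BddAbove ((fun x => |p.eval x|) '' Icc (1 / c) (1 / a)) :=
    isCompact_Icc.bddAbove_image (continuous_abs.comp p.continuous).continuousOn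
  refine hstep.norm_err_le hU hM hd0 hustar hfp hmk.le hdeg hp1
    (Real.sSup_nonneg fun _ ⟨_, _, hx⟩ => hx ▸ abs_nonneg _) fun j => ?_
  exact le_csSup hbdd (mem_image_of_mem _ (inv_mem_Icc_inv h0 (hd j)))

/-- one-step NGMRES(m) error bound in the SPD case,
`‖(I - Λ) Uᵀ e_{k+1}‖ ≤ ε(a, b, m+1) · ‖(I - Λ) Uᵀ M e_k‖`. -/
theorem stmt_4 {n m k : ℕ} (A U : Matrix (Fin n) (Fin n) ℝ) (d : Fin n → ℝ)
    (hA : IsUnit A) (hPD : ((1 : Matrix (Fin n) (Fin n) ℝ) - A).PosDef)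
    (hU : Uᵀ * U = 1)
    (hM : (1 : Matrix (Fin n) (Fin n) ℝ) - A = U * Matrix.diagonal d * Uᵀ)
    (a c : ℝ) (hac : a < c)
    (h0 : (0 : ℝ) ∉ Set.Icc a c) (h1 : (1 : ℝ) ∉ Set.Icc a c)
    (hd : ∀ i, d i ∈ Set.Icc a c)
    (b ustar : EuclideanSpace ℝ (Fin n)) (hustar : mulVecE A ustar = b)
    (u : ℕ → EuclideanSpace ℝ (Fin n))
    (hfp : ∀ j, 1 ≤ j → j ≤ k → u j = fp A b (u (j-1)))
    (hmk : m < k) (next : EuclideanSpace ℝ (Fin n))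
    (hstep : NGMRESStep A b m u k next) :
    ‖mulVecE ((1 - Matrix.diagonal d) * Uᵀ) (next - ustar)‖ ≤
      eps a c (m+1) *
        ‖mulVecE ((1 - Matrix.diagonal d) * Uᵀ * (1 - A)) (u k - ustar)‖ :=
  stmt_4_general A U d hU hM a c h0 hd b ustar hustar u hfp hmk next hstep

end
end

section
/- Assume M is symmetric positive definite, all eigenvalues of M lie in an interval [a, b] with 0, 1 ∉ [a, b], and m < k. Starting from u₀, let u_j = q(u_{j−1}) for j = 1, …, k, and let u_{k+1} be produced by a single NGMRES(m) step from u_{k−m}, …, u_k. Then ‖r_{k+1}‖ ≤ ε(a, b, m+1) · ‖M r_k‖. -/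
open Matrix Polynomial Set

noncomputable section

/-! Since `r(q(u)) = M r(u)`, the Richardson iterates satisfy `r_{k-i} = M⁻¹^(i+1) v` with
`v = M r_k` for all `i ≤ m < k`. For a polynomial `p` of degree at most `m + 1` with `p(1) = 1`,
the coefficients `β_i = -p_{i+1}` turn the NGMRES objective into `‖p(M⁻¹) v‖`, so minimality of
`β` gives `‖r_{k+1}‖ ≤ ‖p(M⁻¹)‖ ‖v‖`. If the spectrum of `M` lies in `[a, c]`, then `M⁻¹` is
symmetric with spectrum in `[1/c, 1/a]`, so the continuous functional calculus bounds `‖p(M⁻¹)‖`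
by the maximum of `|p|` on `[1/c, 1/a]`; the infimum over `p` is `ε(a, c, m+1)`. -/

theorem Polynomial.aeval_eq_one_add_sum_smul_one_sub_pow {R A : Type*} [CommRing R] [Ring A]
    [Algebra R A] {m : ℕ} (x : A) {p : R[X]} (hdeg : p.natDegree ≤ m + 1) (h1 : p.eval 1 = 1) :
    aeval x p = 1 + ∑ i : Fin (m + 1), (-p.coeff (i + 1)) • (1 - x ^ ((i : ℕ) + 1)) := by
  have hlt : p.natDegree < m + 2 := by omega
  have hcoeff_zero : p.coeff 0 = 1 - ∑ i ∈ Finset.range (m + 1), p.coeff (i + 1) := by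
    rw [eval_eq_sum_range' hlt, Finset.sum_range_succ'] at h1
    simp only [one_pow, mul_one] at h1
    linear_combination h1
  rw [aeval_eq_sum_range' hlt, Finset.sum_range_succ', hcoeff_zero,
    Fin.sum_univ_eq_sum_range (fun i => (-p.coeff (i + 1)) • (1 - x ^ (i + 1))) (m + 1)]
  simp only [pow_zero, neg_smul, smul_sub, sub_smul, one_smul, Finset.sum_neg_distrib,
    Finset.sum_sub_distrib, Finset.sum_smul]
  abel

variable {n : ℕ}

lemma mulVecE_eq_toEuclideanCLM (B : Matrix (Fin n) (Fin n) ℝ) (v : EuclideanSpace ℝ (Fin n)) :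
    mulVecE B v = toEuclideanCLM (𝕜 := ℝ) B v := rfl

lemma mulVecE_mulVecE (B C : Matrix (Fin n) (Fin n) ℝ) (v : EuclideanSpace ℝ (Fin n)) :
    mulVecE B (mulVecE C v) = mulVecE (B * C) v := by
  simp only [mulVecE_eq_toEuclideanCLM, map_mul, mul_apply_eq_comp]

lemma res_fp (A : Matrix (Fin n) (Fin n) ℝ) (b u : EuclideanSpace ℝ (Fin n)) :
    res A b (fp A b u) = mulVecE (1 - A) (res A b u) := by
  simp only [res, fp, mulVecE_eq_toEuclideanCLM, map_add, map_sub, map_one,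
    _root_.sub_apply, one_apply_eq_self]
  abel

section Iterates

variable {A : Matrix (Fin n) (Fin n) ℝ} {b : EuclideanSpace ℝ (Fin n)}
  {u : ℕ → EuclideanSpace ℝ (Fin n)} {k : ℕ}

lemma res_eq_pow_mulVecE_res (hfp : ∀ j, 1 ≤ j → j ≤ k → u j = fp A b (u (j - 1))) :
    ∀ i ≤ k, res A b (u k) = mulVecE ((1 - A) ^ i) (res A b (u (k - i)))
  | 0, _ => by simp [mulVecE_eq_toEuclideanCLM]
  | i + 1, hi => by
    rw [res_eq_pow_mulVecE_res hfp i (by omega), hfp (k - i) (by omega) (by omega), res_fp,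
      mulVecE_mulVecE, ← pow_succ, Nat.sub_sub]

lemma res_eq_inv_pow_mulVecE (hM : IsUnit (1 - A))
    (hfp : ∀ j, 1 ≤ j → j ≤ k → u j = fp A b (u (j - 1))) {i : ℕ} (hi : i < k) :
    res A b (u (k - i)) = mulVecE ((1 - A)⁻¹ ^ (i + 1)) (mulVecE (1 - A) (res A b (u k))) := by
  have hinv : (1 - A)⁻¹ ^ (i + 1) * (1 - A) ^ (i + 1) = 1 :=
    pow_mul_pow_eq_one _ (nonsing_inv_mul _ ((isUnit_iff_isUnit_det _).mp hM))
  rw [res_eq_pow_mulVecE_res hfp i hi.le, mulVecE_mulVecE, mulVecE_mulVecE, mul_assoc,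
    ← pow_succ', hinv, mulVecE_eq_toEuclideanCLM, map_one, one_apply_eq_self]

lemma ngObj_eq_norm_aeval {m : ℕ} (hM : IsUnit (1 - A))
    (hfp : ∀ j, 1 ≤ j → j ≤ k → u j = fp A b (u (j - 1))) (hmk : m < k)
    {p : ℝ[X]} (hdeg : p.natDegree ≤ m + 1) (h1 : p.eval 1 = 1) :
    ngObj A b m u k (fun i => -p.coeff ((i : ℕ) + 1)) =
      ‖mulVecE (aeval (1 - A)⁻¹ p) (mulVecE (1 - A) (res A b (u k)))‖ := by
  have hback (i : Fin (m + 1)) := res_eq_inv_pow_mulVecE hM hfp (lt_of_le_of_lt i.is_le hmk)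
  rw [ngObj, aeval_eq_one_add_sum_smul_one_sub_pow _ hdeg h1]
  simp only [res_fp, hback]
  generalize mulVecE (1 - A) (res A b (u k)) = v
  simp only [mulVecE_eq_toEuclideanCLM, map_add, map_sum, map_smul, map_sub, map_one,
    _root_.add_apply, _root_.sum_apply, _root_.smul_apply, _root_.sub_apply, one_apply_eq_self]

lemma NGMRESStep.norm_res_le_ngObj {m : ℕ} {next : EuclideanSpace ℝ (Fin n)}
    (h : NGMRESStep A b m u k next) (γ : Fin (m + 1) → ℝ) :
    ‖res A b next‖ ≤ ngObj A b m u k γ := by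
  obtain ⟨β, hmin, rfl⟩ := h
  refine le_of_eq_of_le ?_ (hmin γ)
  simp only [ngObj, res, mulVecE_eq_toEuclideanCLM, map_add, map_sum, map_smul, map_sub]
  congr 1
  simp only [sub_sub_sub_cancel_right]
  abel

end Iterates

open scoped Matrix.Norms.L2Operator in
lemma norm_mulVecE_aeval_le {N : Matrix (Fin n) (Fin n) ℝ} (hN : N.IsHermitian) {p : ℝ[X]}
    {C : ℝ} (hC : 0 ≤ C) (hp : ∀ x ∈ spectrum ℝ N, |p.eval x| ≤ C)
    (v : EuclideanSpace ℝ (Fin n)) :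
    ‖mulVecE (aeval N p) v‖ ≤ C * ‖v‖ := by
  have hnorm : ‖aeval N p‖ ≤ C := by
    rw [← cfc_polynomial p N hN.isSelfAdjoint]
    exact norm_cfc_le hC hp
  calc ‖mulVecE (aeval N p) v‖ ≤ ‖aeval N p‖ * ‖v‖ :=
        (toEuclideanCLM (𝕜 := ℝ) (aeval N p)).le_opNorm v
    _ ≤ C * ‖v‖ := by gcongr

lemma spectrum_inv_subset_Icc {M : Matrix (Fin n) (Fin n) ℝ} (hM : M.PosDef) {a c : ℝ}
    (h0 : (0 : ℝ) ∉ Icc a c) (hspec : spectrum ℝ M ⊆ Icc a c) :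
    spectrum ℝ M⁻¹ ⊆ Icc (1 / c) (1 / a) := by
  intro x hx
  lift M to (Matrix (Fin n) (Fin n) ℝ)ˣ using hM.isUnit
  rw [← coe_units_inv, ← spectrum.map_inv] at hx
  have hx' : x⁻¹ ∈ spectrum ℝ (M : Matrix (Fin n) (Fin n) ℝ) := hx
  obtain ⟨i, hi⟩ := (hM.isHermitian.spectrum_real_eq_range_eigenvalues ▸ hx' :)
  have hpos : 0 < x⁻¹ := hi ▸ hM.eigenvalues_pos i
  obtain ⟨hax, hxc⟩ := hspec hx'
  have ha : 0 < a := by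
    by_contra! ha
    exact h0 ⟨ha, hpos.le.trans hxc⟩
  rw [one_div, one_div]
  exact ⟨by simpa using inv_anti₀ hpos hxc, by simpa using inv_anti₀ ha hax⟩

lemma le_eps_mul_of_forall {a c x y : ℝ} {s : ℕ} (hy : 0 ≤ y)
    (h : ∀ p : ℝ[X], p.natDegree ≤ s → p.eval 1 = 1 →
      x ≤ sSup ((fun t => |p.eval t|) '' Icc (1 / c) (1 / a)) * y) :
    x ≤ eps a c s * y := by
  rw [eps, mul_comm, ← smul_eq_mul, ← Real.sInf_smul_of_nonneg hy]
  refine le_csInf ⟨_, _, ⟨1, by simp, by simp, rfl⟩, rfl⟩ ?_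
  rintro _ ⟨_, ⟨p, hdeg, h1, rfl⟩, rfl⟩
  dsimp only
  rw [smul_eq_mul, mul_comm]
  exact h p hdeg h1

theorem stmt_5_general {n m k : ℕ} (A : Matrix (Fin n) (Fin n) ℝ)
    (hPD : ((1 : Matrix (Fin n) (Fin n) ℝ) - A).PosDef)
    (a c : ℝ)
    (h0 : (0 : ℝ) ∉ Set.Icc a c)
    (hspec : spectrum ℝ ((1 : Matrix (Fin n) (Fin n) ℝ) - A) ⊆ Set.Icc a c)
    (b : EuclideanSpace ℝ (Fin n)) (u : ℕ → EuclideanSpace ℝ (Fin n))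
    (hfp : ∀ j, 1 ≤ j → j ≤ k → u j = fp A b (u (j-1)))
    (hmk : m < k) (next : EuclideanSpace ℝ (Fin n))
    (hstep : NGMRESStep A b m u k next) :
    ‖res A b next‖ ≤ eps a c (m+1) * ‖mulVecE (1 - A) (res A b (u k))‖ := by
  refine le_eps_mul_of_forall (norm_nonneg _) fun p hdeg h1 => ?_
  have hbdd : BddAbove ((fun t => |p.eval t|) '' Icc (1 / c) (1 / a)) :=
    (isCompact_Icc.image_of_continuousOn p.continuous.abs.continuousOn).bddAbove
  have hsup (t : ℝ) (ht : t ∈ Icc (1 / c) (1 / a)) :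
      |p.eval t| ≤ sSup ((fun t => |p.eval t|) '' Icc (1 / c) (1 / a)) :=
    le_csSup hbdd ⟨t, ht, rfl⟩
  calc ‖res A b next‖ ≤ ngObj A b m u k (fun i => -p.coeff ((i : ℕ) + 1)) :=
        hstep.norm_res_le_ngObj _
    _ = ‖mulVecE (aeval (1 - A)⁻¹ p) (mulVecE (1 - A) (res A b (u k)))‖ :=
        ngObj_eq_norm_aeval hPD.isUnit hfp hmk hdeg h1
    _ ≤ _ := norm_mulVecE_aeval_le hPD.isHermitian.inv
        (Real.sSup_nonneg <| by rintro _ ⟨t, -, rfl⟩; exact abs_nonneg _)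
        (fun t ht => hsup t (spectrum_inv_subset_Icc hPD h0 hspec ht)) _

/-- one-step NGMRES(m) residual bound in the SPD case,
`‖r_{k+1}‖ ≤ ε(a, b, m+1) · ‖M r_k‖`. -/
theorem stmt_5 {n m k : ℕ} (A : Matrix (Fin n) (Fin n) ℝ) (hA : IsUnit A)
    (hPD : ((1 : Matrix (Fin n) (Fin n) ℝ) - A).PosDef)
    (a c : ℝ) (hac : a < c)
    (h0 : (0 : ℝ) ∉ Set.Icc a c) (h1 : (1 : ℝ) ∉ Set.Icc a c)
    (hspec : spectrum ℝ ((1 : Matrix (Fin n) (Fin n) ℝ) - A) ⊆ Set.Icc a c)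
    (b : EuclideanSpace ℝ (Fin n)) (u : ℕ → EuclideanSpace ℝ (Fin n))
    (hfp : ∀ j, 1 ≤ j → j ≤ k → u j = fp A b (u (j-1)))
    (hmk : m < k) (next : EuclideanSpace ℝ (Fin n))
    (hstep : NGMRESStep A b m u k next) :
    ‖res A b next‖ ≤ eps a c (m+1) * ‖mulVecE (1 - A) (res A b (u k))‖ :=
  stmt_5_general A hPD a c h0 hspec b u hfp hmk next hstep

end
end
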